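/- Forward completeness of a quasi-metric space (M,d) together with the property that for every x and r > 0 the closed forward ball B̄ₓ(r) is compact implies: for every pair x, y with d(x,y) < ∞ and every minimizing sequence of 1-Lipschitz curves from x to y with lengths converging to d(x,y), there exists a 1-Lipschitz curve from x to y of length exactly d(x,y). -/

import Mathlib

/-!
Let `T = d(x,y) + 1` and fix an ultrafilter `U` finer than `atTop`. Every `γₖ t` lies in the
compact forward ball `B̄ₓ(T)`, so for each `t` the values `γₖ t` converge along `U`, and the
pointwise limit `γ` is again forward 1-Lipschitz by continuity of `d`. Every partition sum of
`γ` is the limit along `U` of the same partition sum of `γₖ`, which is at most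
`ℓ(γₖ) → d(x,y)`; hence `ℓ(γ) ≤ d(x,y)`, and the two-point partition gives the reverse
inequality. Since the length is lower semicontinuous already under pointwise convergence, no
equicontinuity (Arzelà–Ascoli) argument is needed.
-/

open Filter Topology

/-- The length of a curve γ : [0,T] → M in a quasi-metric space: the supremum over
partitions 0 = u₀ ≤ u₁ ≤ ⋯ ≤ uₙ = T of Σ d(γ(uᵢ), γ(uᵢ₊₁)). -/
noncomputable def curveLen {M : Type*} (d : M → M → ℝ) (T : ℝ) (γ : ℝ → M) : ℝ :=
  sSup {s : ℝ | ∃ (n : ℕ) (u : Fin (n + 1) → ℝ), Monotone u ∧ u 0 = 0 ∧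
    u (Fin.last n) = T ∧ s = ∑ i : Fin n, d (γ (u i.castSucc)) (γ (u i.succ))}

theorem Fin.sum_succ_sub_castSucc {G : Type*} [AddCommGroup G] {n : ℕ} (u : Fin (n + 1) → G) :
    ∑ i : Fin n, (u i.succ - u i.castSucc) = u (Fin.last n) - u 0 := by
  induction n with
  | zero => simp
  | succ n ih =>
    rw [Fin.sum_univ_castSucc]
    have := ih fun i => u i.castSucc
    simp only [Fin.succ_castSucc, Fin.castSucc_zero] at this ⊢
    rw [this, Fin.succ_last]
    abel

/-- Limits need not be unique in `X`, so the limit is chosen to be `c` wherever `f · a` is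
constantly `c`. -/
theorem Ultrafilter.exists_tendsto_apply_of_isCompact {ι α X : Type*} [TopologicalSpace X]
    (U : Ultrafilter ι) (f : ι → α → X) (s : Set α) (K : α → Set X)
    (hK : ∀ a ∈ s, IsCompact (K a)) (hfK : ∀ a ∈ s, ∀ᶠ i in (U : Filter ι), f i a ∈ K a) :
    ∃ g : α → X, (∀ a ∈ s, Tendsto (fun i => f i a) U (𝓝 (g a))) ∧
      ∀ a c, (∀ i, f i a = c) → g a = c := by
  obtain ⟨i₀⟩ := nonempty_of_neBot (U : Filter ι)
  have key : ∀ a, ∃ z, (a ∈ s → Tendsto (fun i => f i a) U (𝓝 z)) ∧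
      ∀ c, (∀ i, f i a = c) → z = c := by
    intro a
    by_cases hconst : ∃ c, ∀ i, f i a = c
    · obtain ⟨c, hc⟩ := hconst
      refine ⟨c, fun _ => ?_, fun c' hc' => (hc i₀).symm.trans (hc' i₀)⟩
      simp only [hc]
      exact tendsto_const_nhds
    · by_cases ha : a ∈ s
      · obtain ⟨z, -, hz⟩ := (hK a ha).ultrafilter_le_nhds (U.map fun i => f i a)
          (le_principal_iff.2 (hfK a ha))
        exact ⟨z, fun _ => hz, fun c hc => (hconst ⟨c, hc⟩).elim⟩
      · exact ⟨f i₀ a, fun h => (ha h).elim, fun c hc => (hconst ⟨c, hc⟩).elim⟩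
  choose g hg using key
  exact ⟨g, fun a ha => (hg a).1 ha, fun a => (hg a).2⟩

section CurveLength

variable {M : Type*} (d : M → M → ℝ)

def ForwardOneLipschitzOn (T : ℝ) (γ : ℝ → M) : Prop :=
  ∀ s t : ℝ, 0 ≤ s → s ≤ t → t ≤ T → d (γ s) (γ t) ≤ t - s

def IsPartition (T : ℝ) {n : ℕ} (u : Fin (n + 1) → ℝ) : Prop :=
  Monotone u ∧ u 0 = 0 ∧ u (Fin.last n) = T

def partitionSum (γ : ℝ → M) {n : ℕ} (u : Fin (n + 1) → ℝ) : ℝ :=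
  ∑ i : Fin n, d (γ (u i.castSucc)) (γ (u i.succ))

variable {d}

theorem curveLen_eq_sSup (T : ℝ) (γ : ℝ → M) :
    curveLen d T γ = sSup {s | ∃ (n : ℕ) (u : Fin (n + 1) → ℝ),
      IsPartition T u ∧ s = partitionSum d γ u} := by
  simp only [curveLen, IsPartition, partitionSum, and_assoc]

theorem IsPartition.mem_Icc {T : ℝ} {n : ℕ} {u : Fin (n + 1) → ℝ} (hu : IsPartition T u)
    (i : Fin (n + 1)) : u i ∈ Set.Icc 0 T :=
  ⟨hu.2.1 ▸ hu.1 (Fin.zero_le i), hu.2.2 ▸ hu.1 (Fin.le_last i)⟩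

theorem IsPartition.le_succ {T : ℝ} {n : ℕ} {u : Fin (n + 1) → ℝ} (hu : IsPartition T u)
    (i : Fin n) : u i.castSucc ≤ u i.succ :=
  hu.1 Fin.castSucc_lt_succ.le

theorem ForwardOneLipschitzOn.partitionSum_le {T : ℝ} {γ : ℝ → M}
    (hγ : ForwardOneLipschitzOn d T γ) {n : ℕ} {u : Fin (n + 1) → ℝ} (hu : IsPartition T u) :
    partitionSum d γ u ≤ T :=
  calc partitionSum d γ u ≤ ∑ i : Fin n, (u i.succ - u i.castSucc) :=
        Finset.sum_le_sum fun i _ =>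
          hγ _ _ (hu.mem_Icc _).1 (hu.le_succ i) (hu.mem_Icc _).2
    _ = T := by rw [Fin.sum_succ_sub_castSucc, hu.2.1, hu.2.2, sub_zero]

theorem ForwardOneLipschitzOn.partitionSum_le_curveLen {T : ℝ} {γ : ℝ → M}
    (hγ : ForwardOneLipschitzOn d T γ) {n : ℕ} {u : Fin (n + 1) → ℝ} (hu : IsPartition T u) :
    partitionSum d γ u ≤ curveLen d T γ := by
  rw [curveLen_eq_sSup]
  exact le_csSup ⟨T, by rintro _ ⟨m, v, hv, rfl⟩; exact hγ.partitionSum_le hv⟩ ⟨n, u, hu, rfl⟩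

theorem isPartition_pair {T : ℝ} (hT : 0 ≤ T) : IsPartition T ![0, T] := by
  refine ⟨fun i j hij => ?_, rfl, rfl⟩
  fin_cases i <;> fin_cases j <;> simp_all

theorem ForwardOneLipschitzOn.dist_le_curveLen {T : ℝ} (hT : 0 ≤ T) {γ : ℝ → M}
    (hγ : ForwardOneLipschitzOn d T γ) : d (γ 0) (γ T) ≤ curveLen d T γ := by
  simpa [partitionSum] using hγ.partitionSum_le_curveLen (isPartition_pair hT)

theorem curveLen_le_of_forall_partitionSum_le {T L : ℝ} (hT : 0 ≤ T) {γ : ℝ → M}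
    (h : ∀ (n : ℕ) (u : Fin (n + 1) → ℝ), IsPartition T u → partitionSum d γ u ≤ L) :
    curveLen d T γ ≤ L := by
  rw [curveLen_eq_sSup]
  exact csSup_le ⟨_, 1, _, isPartition_pair hT, rfl⟩ (by rintro _ ⟨n, u, hu, rfl⟩; exact h n u hu)

variable [TopologicalSpace M] {ι : Type*} {l : Filter ι} {T : ℝ}
  {γs : ι → ℝ → M} {γ : ℝ → M}

theorem tendsto_partitionSum (hd : Continuous fun q : M × M => d q.1 q.2)
    (hconv : ∀ t ∈ Set.Icc 0 T, Tendsto (fun k => γs k t) l (𝓝 (γ t)))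
    {n : ℕ} {u : Fin (n + 1) → ℝ} (hu : IsPartition T u) :
    Tendsto (fun k => partitionSum d (γs k) u) l (𝓝 (partitionSum d γ u)) :=
  tendsto_finsetSum _ fun _ _ => (hd.tendsto _).comp
    ((hconv _ (hu.mem_Icc _)).prodMk_nhds (hconv _ (hu.mem_Icc _)))

theorem ForwardOneLipschitzOn.of_tendsto [l.NeBot] (hd : Continuous fun q : M × M => d q.1 q.2)
    (hγs : ∀ k, ForwardOneLipschitzOn d T (γs k))
    (hconv : ∀ t ∈ Set.Icc 0 T, Tendsto (fun k => γs k t) l (𝓝 (γ t))) :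
    ForwardOneLipschitzOn d T γ := fun s t hs hst ht =>
  le_of_tendsto ((hd.tendsto _).comp
      ((hconv s ⟨hs, hst.trans ht⟩).prodMk_nhds (hconv t ⟨hs.trans hst, ht⟩)))
    (Eventually.of_forall fun k => hγs k s t hs hst ht)

theorem curveLen_le_of_tendsto [l.NeBot] (hd : Continuous fun q : M × M => d q.1 q.2) (hT : 0 ≤ T)
    (hγs : ∀ k, ForwardOneLipschitzOn d T (γs k))
    (hconv : ∀ t ∈ Set.Icc 0 T, Tendsto (fun k => γs k t) l (𝓝 (γ t)))
    {L : ℝ} (hlen : Tendsto (fun k => curveLen d T (γs k)) l (𝓝 L)) :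
    curveLen d T γ ≤ L :=
  curveLen_le_of_forall_partitionSum_le hT fun _ _ hu =>
    le_of_tendsto_of_tendsto' (tendsto_partitionSum hd hconv hu) hlen
      fun k => (hγs k).partitionSum_le_curveLen hu

end CurveLength

theorem stmt_15_general {M : Type*} [τ : TopologicalSpace M] (d : M → M → ℝ)
    (hnonneg : ∀ x y, 0 ≤ d x y)
    (hdcont : Continuous fun q : M × M => d q.1 q.2)
    (hcompact : ∀ (x : M) (r : ℝ), IsCompact {y | d x y ≤ r})
    (x y : M) (γseq : ℕ → ℝ → M)
    (hlip : ∀ k, ∀ s t : ℝ, 0 ≤ s → s ≤ t → t ≤ d x y + 1 →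
      d (γseq k s) (γseq k t) ≤ t - s)
    (hends : ∀ k, γseq k 0 = x ∧ γseq k (d x y + 1) = y)
    (hmin : Filter.Tendsto (fun k => curveLen d (d x y + 1) (γseq k))
      Filter.atTop (nhds (d x y))) :
    ∃ γ : ℝ → M,
      (∀ s t : ℝ, 0 ≤ s → s ≤ t → t ≤ d x y + 1 → d (γ s) (γ t) ≤ t - s) ∧
      γ 0 = x ∧ γ (d x y + 1) = y ∧ curveLen d (d x y + 1) γ = d x y := by
  set T := d x y + 1
  have hT : 0 ≤ T := by linarith [hnonneg x y]
  let U : Ultrafilter ℕ := .of atTop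
  have hball : ∀ t ∈ Set.Icc 0 T, ∀ᶠ k in (U : Filter ℕ), γseq k t ∈ {z | d x z ≤ T} :=
    fun t ht => Eventually.of_forall fun k => by
      simpa [(hends k).1] using (hlip k 0 t le_rfl ht.1 ht.2).trans (by linarith [ht.2])
  obtain ⟨γ, hconv, hconst⟩ := U.exists_tendsto_apply_of_isCompact γseq (Set.Icc 0 T)
    (fun _ => {z | d x z ≤ T}) (fun _ _ => hcompact x T) hball
  have hγ : ForwardOneLipschitzOn d T γ := .of_tendsto hdcont hlip hconv
  have hγ0 : γ 0 = x := hconst 0 x fun k => (hends k).1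
  have hγT : γ T = y := hconst T y fun k => (hends k).2
  refine ⟨γ, hγ, hγ0, hγT, le_antisymm ?_ ?_⟩
  · exact curveLen_le_of_tendsto hdcont hT hlip hconv (hmin.mono_left (Ultrafilter.of_le atTop))
  · simpa [hγ0, hγT] using hγ.dist_le_curveLen hT

/-- In a forward complete quasi-metric space with compact closed forward balls,
given x, y and a minimizing sequence of forward 1-Lipschitz curves from x to y
whose lengths converge to d(x,y), there exists a forward 1-Lipschitz curve from
x to y of length exactly d(x,y). -/
theorem stmt_15 {M : Type*} [τ : TopologicalSpace M] (d : M → M → ℝ)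
    (hτ : τ = TopologicalSpace.generateFrom
      {s : Set M | ∃ (x : M) (r : ℝ), s = {y | d x y < r}})
    (hnonneg : ∀ x y, 0 ≤ d x y)
    (hsep : ∀ x y, d x y = 0 ↔ x = y)
    (htri : ∀ x y z, d x z ≤ d x y + d y z)
    (hdcont : Continuous fun q : M × M => d q.1 q.2)
    (hcomplete : ∀ x : ℕ → M,
      (∀ ε > (0 : ℝ), ∃ N : ℕ, ∀ i j : ℕ, N ≤ i → i ≤ j → d (x i) (x j) < ε) →
      ∃ y, Filter.Tendsto (fun i => d (x i) y) Filter.atTop (nhds 0))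
    (hcompact : ∀ (x : M) (r : ℝ), IsCompact {y | d x y ≤ r})
    (x y : M) (γseq : ℕ → ℝ → M)
    (hlip : ∀ k, ∀ s t : ℝ, 0 ≤ s → s ≤ t → t ≤ d x y + 1 →
      d (γseq k s) (γseq k t) ≤ t - s)
    (hends : ∀ k, γseq k 0 = x ∧ γseq k (d x y + 1) = y)
    (hmin : Filter.Tendsto (fun k => curveLen d (d x y + 1) (γseq k))
      Filter.atTop (nhds (d x y))) :
    ∃ γ : ℝ → M,
      (∀ s t : ℝ, 0 ≤ s → s ≤ t → t ≤ d x y + 1 → d (γ s) (γ t) ≤ t - s) ∧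
      γ 0 = x ∧ γ (d x y + 1) = y ∧ curveLen d (d x y + 1) γ = d x y :=
  stmt_15_general (τ := τ) d hnonneg hdcont hcompact x y γseq hlip hends hmin
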